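/- Let X be a proper hyperbolic geodesic metric space with thin-triangles constant κ₀ and let c>0 be the universal constant such that |β_a(·,y) − β_a(·,x) + β_a(y,x)| ≤ c for all a ∈ ∂X and x,y ∈ X. Then there is a constant κ > 0 depending only on the hyperbolicity constant of X such that for every isometry g of X which fixes a point a ∈ ∂X and is not a hyperbolic isometry, one has |β_a(z,y) − β_a(z,gy)| ≤ κ for all y,z ∈ X. -/

import Mathlib

open Metric Filter Set MeasureTheory Topology Pointwise
open scoped ENNReal NNReal

noncomputable section

namespace PaperHyp

variable {X : Type*} [MetricSpace X]

/-- `f` parametrizes a geodesic segment from `x` to `y` on the interval `[0, dist x y]`. -/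
def IsGeodesicSegmentBetween (f : ℝ → X) (x y : X) : Prop :=
  f 0 = x ∧ f (dist x y) = y ∧
    ∀ s ∈ Set.Icc (0 : ℝ) (dist x y), ∀ t ∈ Set.Icc (0 : ℝ) (dist x y),
      dist (f s) (f t) = |s - t|

/-- `X` is a geodesic metric space: any two points are joined by a geodesic segment. -/
def GeodesicSpace (X : Type*) [MetricSpace X] : Prop :=
  ∀ x y : X, ∃ f : ℝ → X, IsGeodesicSegmentBetween f x y

/-- The set `s` is the image of a geodesic segment from `x` to `y`. -/
def IsGeodesicSegmentSet (s : Set X) (x y : X) : Prop :=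
  ∃ f : ℝ → X, IsGeodesicSegmentBetween f x y ∧ s = f '' Set.Icc 0 (dist x y)

/-- The `δ`-thin triangle condition: each side of a geodesic triangle is contained in the
`δ`-neighborhood of the union of the other two sides. -/
def DeltaThinTriangles (X : Type*) [MetricSpace X] (δ : ℝ) : Prop :=
  ∀ x y z : X, ∀ a b c : Set X,
    IsGeodesicSegmentSet a x y → IsGeodesicSegmentSet b y z → IsGeodesicSegmentSet c x z →
      ∀ p ∈ c, ∃ q ∈ a ∪ b, dist p q ≤ δ

/-- Gromov hyperbolicity: the `δ`-thin triangle condition for some `δ > 0`. -/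
def GromovHyperbolic (X : Type*) [MetricSpace X] : Prop :=
  ∃ δ > 0, DeltaThinTriangles X δ

/-- The Gromov product `(y,z)_x`. -/
def gromovProd (x y z : X) : ℝ := (dist y x + dist z x - dist y z) / 2

/-- A sequence converging to infinity in the sense of Gromov. -/
def IsGromovSeq (x : X) (u : ℕ → X) : Prop :=
  Tendsto (fun p : ℕ × ℕ => gromovProd x (u p.1) (u p.2)) atTop atTop

/-- The space of Gromov sequences. -/
def GromovSeq (X : Type*) [MetricSpace X] : Type _ :=
  {u : ℕ → X // ∀ x : X, IsGromovSeq x u}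

/-- Two Gromov sequences are equivalent if their mutual Gromov products tend to infinity. -/
def gromovRel (u v : GromovSeq X) : Prop :=
  ∀ x : X, Tendsto (fun p : ℕ × ℕ => gromovProd x (u.1 p.1) (v.1 p.2)) atTop atTop

/-- The Gromov boundary of `X`. -/
def GromovBoundary (X : Type*) [MetricSpace X] : Type _ :=
  Quot (gromovRel (X := X))

/-- A sequence in `X` converges to the boundary point `ξ`. -/
def SeqConvToBoundary (u : ℕ → X) (ξ : GromovBoundary X) : Prop :=
  ∃ h : ∀ x : X, IsGromovSeq x u, Quot.mk gromovRel (⟨u, h⟩ : GromovSeq X) = ξ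

/-- The isometry group of `X`. -/
abbrev Iso (X : Type*) [MetricSpace X] := X ≃ᵢ X

/-- The compact-open topology on the isometry group. -/
instance : TopologicalSpace (Iso X) :=
  TopologicalSpace.induced (fun g : Iso X => (ContinuousMap.mk g g.continuous : C(X, X)))
    ContinuousMap.compactOpen

lemma gromovProd_isometry (g : Iso X) (x y z : X) :
    gromovProd x (g y) (g z) = gromovProd (g.symm x) y z := by
  have h1 : dist (g y) x = dist y (g.symm x) := by
    conv_lhs => rw [← g.apply_symm_apply x]
    rw [g.dist_eq]
  have h2 : dist (g z) x = dist z (g.symm x) := by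
    conv_lhs => rw [← g.apply_symm_apply x]
    rw [g.dist_eq]
  unfold gromovProd
  rw [h1, h2, g.dist_eq]

lemma isGromovSeq_comp (g : Iso X) {u : ℕ → X} (h : ∀ x : X, IsGromovSeq x u) (x : X) :
    IsGromovSeq x (fun n => g (u n)) := by
  have hx := h (g.symm x)
  unfold IsGromovSeq at hx ⊢
  simp only [gromovProd_isometry]
  exact hx

/-- An isometry maps Gromov sequences to Gromov sequences. -/
def GromovSeq.map (g : Iso X) (u : GromovSeq X) : GromovSeq X :=
  ⟨fun n => g (u.1 n), fun x => isGromovSeq_comp g u.2 x⟩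

lemma gromovRel_map (g : Iso X) {u v : GromovSeq X} (h : gromovRel u v) :
    gromovRel (u.map g) (v.map g) := by
  intro x
  have hx := h (g.symm x)
  show Tendsto (fun p : ℕ × ℕ => gromovProd x (g (u.1 p.1)) (g (v.1 p.2))) atTop atTop
  simp only [gromovProd_isometry]
  exact hx

/-- The induced action of an isometry on the Gromov boundary. -/
def boundaryMap (g : Iso X) : GromovBoundary X → GromovBoundary X :=
  Quot.map (GromovSeq.map g) (fun _ _ h => gromovRel_map g h)

/-- The Gromov product of two boundary points, based at `x`. -/
def gromovProdB (x : X) (ξ η : GromovBoundary X) : ℝ≥0∞ :=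
  ⨆ (u : GromovSeq X) (_ : Quot.mk gromovRel u = ξ) (v : GromovSeq X) (_ : Quot.mk gromovRel v = η),
    Filter.liminf (fun p : ℕ × ℕ => ENNReal.ofReal (gromovProd x (u.1 p.1) (v.1 p.2))) atTop

/-- The (visual) topology on the Gromov boundary. -/
instance : TopologicalSpace (GromovBoundary X) where
  IsOpen U := ∀ ξ ∈ U, ∀ x : X, ∃ R : ℝ≥0∞, R ≠ ⊤ ∧ {η | R < gromovProdB x ξ η} ⊆ U
  isOpen_univ := fun _ _ _ => ⟨0, ENNReal.zero_ne_top, Set.subset_univ _⟩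
  isOpen_inter := by
    intro U V hU hV ξ hξ x
    obtain ⟨R₁, hR₁, hs₁⟩ := hU ξ hξ.1 x
    obtain ⟨R₂, hR₂, hs₂⟩ := hV ξ hξ.2 x
    refine ⟨max R₁ R₂, (max_lt hR₁.lt_top hR₂.lt_top).ne, fun η hη => ?_⟩
    rw [Set.mem_setOf_eq, max_lt_iff] at hη
    exact ⟨hs₁ hη.1, hs₂ hη.2⟩
  isOpen_sUnion := by
    intro S hS ξ hξ x
    obtain ⟨U, hUS, hξU⟩ := hξ
    obtain ⟨R, hR, hsub⟩ := hS U hUS ξ hξU x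
    exact ⟨R, hR, hsub.trans (Set.subset_sUnion_of_mem hUS)⟩

/-- The limit set of a subgroup of the isometry group: all accumulation points in the
Gromov boundary of an orbit in `X`. -/
def limitSet (G : Subgroup (Iso X)) : Set (GromovBoundary X) :=
  {ξ | ∃ (x : X) (g : ℕ → G), SeqConvToBoundary (fun n => (g n : Iso X) x) ξ}

/-- A subgroup of the isometry group is elementary if its limit set contains at most two
points. -/
def IsElementary (G : Subgroup (Iso X)) : Prop :=
  ∃ a b : GromovBoundary X, limitSet G ⊆ {a, b}

/-- `g` is a hyperbolic isometry with attracting fixed point `a` and repelling fixed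
point `b`. -/
def IsHyperbolicWithFP (g : Iso X) (a b : GromovBoundary X) : Prop :=
  a ≠ b ∧ boundaryMap g a = a ∧ boundaryMap g b = b ∧
    (∀ x : X, SeqConvToBoundary (fun n => (g ^ n) x) a) ∧
    (∀ x : X, SeqConvToBoundary (fun n => (g⁻¹ ^ n) x) b)

/-- `g` is a hyperbolic isometry. -/
def IsHyperbolicIsom (g : Iso X) : Prop :=
  ∃ a b : GromovBoundary X, IsHyperbolicWithFP g a b

/-- `(x,y,z)` is a triple of pairwise distinct points of the limit set of `G`. -/
def InTripleSpace (G : Subgroup (Iso X)) (x y z : GromovBoundary X) : Prop :=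
  x ∈ limitSet G ∧ y ∈ limitSet G ∧ z ∈ limitSet G ∧ x ≠ y ∧ x ≠ z ∧ y ≠ z

/-- The space of triples of pairwise distinct points in the limit set of `G`. -/
def tripleSet (G : Subgroup (Iso X)) :
    Set (GromovBoundary X × GromovBoundary X × GromovBoundary X) :=
  {t | InTripleSpace G t.1 t.2.1 t.2.2}

/-- `G` acts transitively on the complement of the diagonal in `Λ × Λ`. -/
def ActsTransitivelyOffDiagonal (G : Subgroup (Iso X)) : Prop :=
  ∀ p q : GromovBoundary X × GromovBoundary X,
    p.1 ∈ limitSet G → p.2 ∈ limitSet G → p.1 ≠ p.2 →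
    q.1 ∈ limitSet G → q.2 ∈ limitSet G → q.1 ≠ q.2 →
    ∃ h : G, (boundaryMap (h : Iso X) p.1, boundaryMap (h : Iso X) p.2) = q

/-- `γ` is a geodesic ray from `x` to the boundary point `a`. -/
def IsGeodesicRayTo (γ : ℝ → X) (x : X) (a : GromovBoundary X) : Prop :=
  γ 0 = x ∧ (∀ s ∈ Set.Ici (0 : ℝ), ∀ t ∈ Set.Ici (0 : ℝ), dist (γ s) (γ t) = |s - t|) ∧
    SeqConvToBoundary (fun n => γ n) a

/-- `γ` is a biinfinite geodesic from the boundary point `b` to the boundary point `a`. -/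
def IsGeodesicLine (γ : ℝ → X) (b a : GromovBoundary X) : Prop :=
  (∀ s t : ℝ, dist (γ s) (γ t) = |s - t|) ∧
    SeqConvToBoundary (fun n => γ n) a ∧ SeqConvToBoundary (fun n => γ (-(n : ℝ))) b

/-- The Busemann function `β_a(y,x)`. -/
def busemann (a : GromovBoundary X) (y x : X) : ℝ :=
  sSup {r : ℝ | ∃ γ : ℝ → X, IsGeodesicRayTo γ x a ∧
    r = Filter.limsup (fun t : ℝ => dist y (γ t) - t) Filter.atTop}

section Cochains

variable {G : Type*} {E : Type*} [AddCommGroup E]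

/-- The homogeneous coboundary of a `1`-cochain. -/
def coboundaryOf (h : G → G → E) : G → G → G → E :=
  fun a b c => h b c - h a c + h a b

/-- The homogeneous cocycle condition for a `2`-cochain (a function of three variables). -/
def IsCocycle3 (f : G → G → G → E) : Prop :=
  ∀ a b c d : G, f b c d - f a c d + f a b d - f a b c = 0

end Cochains

/-- `ρ` is a distance function. -/
def IsMetricDist {α : Type*} (ρ : α → α → ℝ) : Prop :=
  (∀ a, ρ a a = 0) ∧ (∀ a b, a ≠ b → 0 < ρ a b) ∧ (∀ a b, ρ a b = ρ b a) ∧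
    ∀ a b c, ρ a c ≤ ρ a b + ρ b c

/-- The topology induced by a distance function. -/
def distTopology {α : Type*} (ρ : α → α → ℝ) : TopologicalSpace α :=
  TopologicalSpace.generateFrom {U | ∃ (c : α) (r : ℝ), U = {y | ρ c y < r}}

/-- A topological space is locally euclidean. -/
def LocallyEuclidean (G : Type*) [TopologicalSpace G] : Prop :=
  ∃ n : ℕ, ∀ x : G, ∃ U : Set G, IsOpen U ∧ x ∈ U ∧
    ∃ V : Set (Fin n → ℝ), IsOpen V ∧ Nonempty (U ≃ₜ V)

/-- A proper cocompact continuous isometric action of `L` on a proper geodesic Gromov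
hyperbolic space. -/
structure GeomHypActionOn (L : Type*) [Group L] [TopologicalSpace L]
    (Y : Type) [MetricSpace Y] where
  properY : ProperSpace Y
  geodesicY : GeodesicSpace Y
  hypY : GromovHyperbolic Y
  act : L →* Iso Y
  continuous_act : Continuous fun p : L × Y => act p.1 p.2
  proper_act : ∀ K : Set Y, IsCompact K → IsCompact {g : L | ¬Disjoint ((act g) '' K) K}
  cocompact_act : ∃ K : Set Y, IsCompact K ∧ ⋃ g : L, (act g) '' K = Set.univ

/-- `L` acts geometrically on some proper geodesic Gromov hyperbolic space. (For a
connected semisimple Lie group with finite center this characterizes the groups of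
real rank one.) -/
def ActsGeometricallyOnHypSpace (L : Type*) [Group L] [TopologicalSpace L] : Prop :=
  ∃ (Y : Type) (m : MetricSpace Y), Nonempty (@GeomHypActionOn L _ _ Y m)

/-- `L` is a simple Lie group of (real) rank one. -/
def IsSimpleLieGroupOfRankOne (L : Type*) [Group L] [TopologicalSpace L] : Prop :=
  IsTopologicalGroup L ∧ LocallyEuclidean L ∧ IsConnected (Set.univ : Set L) ∧
    (∃ g h : L, g * h ≠ h * g) ∧ ¬IsCompact (Set.univ : Set L) ∧
    (∀ N : Subgroup L, N.Normal → N ≤ Subgroup.center L ∨ N = ⊤) ∧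
    ActsGeometricallyOnHypSpace L

/-- `G` is a compact extension of a simple Lie group of rank one: it has a compact normal
subgroup such that the quotient is a simple Lie group of rank one. -/
def IsCompactExtensionOfRankOneSimple (G : Type*) [Group G] [TopologicalSpace G] : Prop :=
  ∃ K : Subgroup G, ∃ hK : K.Normal, IsCompact (K : Set G) ∧
    (letI := hK; IsSimpleLieGroupOfRankOne (G ⧸ K))

/-- `G` is a compact extension of a totally disconnected locally compact group. -/
def IsCompactExtensionOfTotallyDisconnected (G : Type*) [Group G] [TopologicalSpace G] : Prop :=
  ∃ K : Subgroup G, K.Normal ∧ IsCompact (K : Set G) ∧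
    TotallyDisconnectedSpace (G ⧸ K) ∧ LocallyCompactSpace (G ⧸ K)

/-- Semisimplicity of a Lie group: the solvable radical is trivial. -/
def HasTrivialSolvableRadical (G : Type*) [Group G] [TopologicalSpace G] : Prop :=
  ∀ N : Subgroup G, N.Normal → IsClosed (N : Set G) → IsConnected (N : Set G) →
    IsSolvable N → N = ⊥

/-- All compact normal subgroups are finite (no compact factors, for a semisimple Lie
group with finite center). -/
def HasNoCompactFactors (G : Type*) [Group G] [TopologicalSpace G] : Prop :=
  ∀ N : Subgroup G, N.Normal → IsCompact (N : Set G) → (N : Set G).Finite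

/-- The center of `G` is finite. -/
def HasFiniteCenter (G : Type*) [Group G] : Prop :=
  (Subgroup.center G : Set G).Finite

/-- For a semisimple Lie group with finite center and no compact factors: rank at least
two, i.e. the group is noncompact and not of rank one (it acts geometrically on no
Gromov hyperbolic space). -/
def HasRankAtLeastTwo (G : Type*) [Group G] [TopologicalSpace G] : Prop :=
  ¬IsCompact (Set.univ : Set G) ∧ ¬ActsGeometricallyOnHypSpace G

/-- `G` has no factors of rank one: there is no continuous surjective homomorphism from
`G` onto a simple Lie group of rank one. -/
def HasNoRankOneFactors (G : Type*) [Group G] [TopologicalSpace G] : Prop :=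
  ∀ (L : Type) [Group L] [TopologicalSpace L],
    IsSimpleLieGroupOfRankOne L → ∀ f : G →* L, Continuous f → ¬Function.Surjective f

/-- `Γ` is a lattice in `G` (with respect to the Haar measure `μ`): a discrete subgroup
admitting a Borel fundamental domain of finite Haar measure. -/
def IsLattice {G : Type*} [Group G] [TopologicalSpace G] [MeasurableSpace G]
    (Γ : Subgroup G) (μ : Measure G) : Prop :=
  IsClosed (Γ : Set G) ∧ DiscreteTopology Γ ∧
    ∃ D : Set G, MeasurableSet D ∧ μ D ≠ ⊤ ∧ ∀ g : G, ∃! γ : Γ, (γ : G) * g ∈ D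

/-- `Γ` is an irreducible lattice in `G`: its projection to each factor is dense. -/
def IsIrreducibleLattice {G : Type*} [Group G] [TopologicalSpace G] [MeasurableSpace G]
    (Γ : Subgroup G) (μ : Measure G) : Prop :=
  IsLattice Γ μ ∧ ∀ N : Subgroup G, N.Normal → IsClosed (N : Set G) →
    ¬IsCompact (N : Set G) → N ≠ ⊤ → Dense ((Γ ⊔ N : Subgroup G) : Set G)

/-- Amenability of a topological group: there is a left-invariant mean on the bounded
continuous functions. -/
def IsAmenableTopGroup (G : Type*) [Group G] [TopologicalSpace G] : Prop :=
  ∃ m : BoundedContinuousFunction G ℝ →ₗ[ℝ] ℝ,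
    (∀ f : BoundedContinuousFunction G ℝ, (∀ x, 0 ≤ f x) → 0 ≤ m f) ∧
    m (BoundedContinuousFunction.const G 1) = 1 ∧
    ∀ (g : G) (f f' : BoundedContinuousFunction G ℝ), (∀ x, f' x = f (g * x)) → m f' = m f

/-- The action of `Γ` on `(S,ν)` is measure preserving. -/
def IsMeasurePreservingSMul (Γ : Type*) [Group Γ] (S : Type*) [MeasurableSpace S]
    [MulAction Γ S] (ν : Measure S) : Prop :=
  ∀ γ : Γ, MeasurePreserving (fun s : S => γ • s) ν ν

/-- The action of `Γ` on `(S,ν)` is mildly mixing: there are no nontrivial recurrent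
sets. -/
def MildlyMixingSMul (Γ : Type*) [Group Γ] (S : Type*) [MeasurableSpace S] [MulAction Γ S]
    (ν : Measure S) : Prop :=
  ∀ A : Set S, MeasurableSet A → ν A ≠ 0 → ν A ≠ ν Set.univ →
    ∀ g : ℕ → Γ, Tendsto g atTop Filter.cofinite →
      Filter.liminf (fun i => ν (symmDiff A (g i • A))) atTop ≠ 0

/-- An `Iso X`-valued cocycle for a measure preserving action of `Γ` on `(S,ν)`. -/
def IsIsoCocycle {Γ : Type*} [Group Γ] {S : Type*} [MeasurableSpace S] [MulAction Γ S]
    (ν : Measure S) {X : Type*} [MetricSpace X] (α : Γ → S → Iso X) : Prop :=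
  (∀ γ : Γ, @Measurable S (Iso X) _ (borel (Iso X)) (α γ)) ∧
    ∀ g h : Γ, ∀ᵐ s ∂ν, α (g * h) s = α g (h • s) * α h s

/-- The cocycle `α` is cohomologous to a cocycle taking values in the subgroup `H`. -/
def IsCohomologousToCocycleInto {Γ : Type*} [Group Γ] {S : Type*} [MeasurableSpace S]
    [MulAction Γ S] (ν : Measure S) {X : Type*} [MetricSpace X] (α : Γ → S → Iso X)
    (H : Subgroup (Iso X)) : Prop :=
  ∃ β : Γ → S → Iso X, IsIsoCocycle ν β ∧ (∀ γ : Γ, ∀ᵐ s ∂ν, β γ s ∈ H) ∧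
    ∃ φ : S → Iso X, @Measurable S (Iso X) _ (borel (Iso X)) φ ∧
      ∀ γ : Γ, ∀ᵐ s ∂ν, φ (γ • s) * α γ s = β γ s * φ s

/-- `(B, lam)` is a strong boundary for `G`: a standard Borel `G`-space with a
quasi-invariant ergodic probability measure such that the action is amenable (here:
admits equivariant Furstenberg maps into spaces of probability measures on compact
metrizable `G`-spaces) and doubly ergodic with coefficients in every separable Banach
module for `G`. -/
def IsStrongBoundary (G : Type*) [Group G] [TopologicalSpace G] [MeasurableSpace G]
    (B : Type*) [MeasurableSpace B] [MulAction G B] (lam : Measure B) : Prop :=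
  IsProbabilityMeasure lam ∧
  Measurable (fun p : G × B => p.1 • p.2) ∧
  (∀ g : G, Measure.map (fun b : B => g • b) lam ≪ lam ∧
    lam ≪ Measure.map (fun b : B => g • b) lam) ∧
  (∀ A : Set B, MeasurableSet A → (∀ g : G, (fun b : B => g • b) ⁻¹' A = A) →
    lam A = 0 ∨ lam A = 1) ∧
  (∀ (Z : Type) [TopologicalSpace Z] [CompactSpace Z] [TopologicalSpace.MetrizableSpace Z]
      [MeasurableSpace Z] [BorelSpace Z] (actZ : G → Z → Z),
      Continuous (fun p : G × Z => actZ p.1 p.2) →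
      (∀ z : Z, actZ 1 z = z) → (∀ g h z, actZ (g * h) z = actZ g (actZ h z)) →
      ∃ Φ : B → ProbabilityMeasure Z,
        @Measurable B (ProbabilityMeasure Z) _ (borel (ProbabilityMeasure Z)) Φ ∧
        ∀ g : G, ∀ᵐ b ∂lam, (Φ (g • b) : Measure Z) = Measure.map (actZ g) (Φ b : Measure Z)) ∧
  (∀ (E : Type) [NormedAddCommGroup E] [NormedSpace ℝ E] [MeasurableSpace E] [BorelSpace E]
      [TopologicalSpace.SeparableSpace E] (actE : G → E → E),
      (∀ v : E, actE 1 v = v) → (∀ g h v, actE (g * h) v = actE g (actE h v)) →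
      (∀ g : G, IsLinearMap ℝ (actE g)) → (∀ (g : G) (v : E), ‖actE g v‖ = ‖v‖) →
      Continuous (fun p : G × E => actE p.1 p.2) →
      ∀ F : B × B → E, Measurable F → (∃ C, ∀ p, ‖F p‖ ≤ C) →
        (∀ g : G, ∀ᵐ p ∂(lam.prod lam), F (g • p.1, g • p.2) = actE g (F p)) →
        ∃ c : E, F =ᵐ[lam.prod lam] fun _ => c)

/-- `X` has bounded growth: for some `b > 0`, every ball of radius `R ≥ 1` contains at
most `b·e^{bR}` disjoint balls of radius `1`. -/
def BoundedGrowth (X : Type*) [MetricSpace X] : Prop :=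
  ∃ b : ℝ, 0 < b ∧ ∀ R : ℝ, 1 ≤ R → ∀ x : X, ∀ t : Finset X,
    (∀ y ∈ t, Metric.ball y 1 ⊆ Metric.ball x R) →
    ((t : Set X).Pairwise fun y z => Disjoint (Metric.ball y 1) (Metric.ball z 1)) →
    (t.card : ℝ) ≤ b * Real.exp (b * R)

/-- The action of `Γ` on `X` given by `ρ` is properly discontinuous. -/
def ProperlyDiscontinuousIso {Γ : Type*} [Group Γ] {X : Type*} [MetricSpace X]
    (ρ : Γ →* Iso X) : Prop :=
  ∀ K : Set X, IsCompact K → {γ : Γ | ¬Disjoint ((ρ γ) '' K) K}.Finite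

/-! Let `σ = β_a(y, gy) - c`. If `σ > 0`, the quasi-cocycle identity and the `g`-invariance of
`β_a` make `β_a(y, gⁿy)` grow at least like `nσ`, so for a geodesic ray `γ` from `y` to `a` the
Gromov products `(gⁿy · γ t)_y` grow linearly in `n`: the forward orbit converges to `a` at linear
speed. The backward orbit then converges to a boundary point `b` fixed by `g`, and `b ≠ a`: by
Fekete's lemma `(gᵐy · g⁻ᵐy)_y = o(m)`, and the four-point condition propagates this bound to all
`(gᵖy · g⁻ᵠy)_y` with `p, q ≥ m`. So `g` is hyperbolic. For non-hyperbolic `g` this leaves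
`β_a(y, gy) ≤ c` and `β_a(gy, y) = β_a(y, g⁻¹y) ≤ c`, and the cocycle identity bounds
`|β_a(z, y) - β_a(z, gy)|` by `4c`. -/

section GromovProduct

variable {X : Type*} [MetricSpace X]

lemma gromovProd_comm (x y z : X) : gromovProd x y z = gromovProd x z y := by
  unfold gromovProd; rw [dist_comm z y]; ring

lemma gromovProd_sub_dist_le (x w p q : X) : gromovProd w p q - dist x w ≤ gromovProd x p q := by
  unfold gromovProd
  linarith [dist_triangle p x w, dist_triangle q x w]

lemma gromovProd_sub_dist_sub_dist_le (w p q p' q' : X) :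
    gromovProd w p' q' - dist p p' - dist q q' ≤ gromovProd w p q := by
  unfold gromovProd
  linarith [dist_triangle p' p w, dist_triangle q' q w, dist_triangle4 p p' q' q,
    dist_comm p p', dist_comm q q']

lemma IsGeodesicSegmentSet.dist_add_dist {s : Set X} {x z p : X}
    (hs : IsGeodesicSegmentSet s x z) (hp : p ∈ s) : dist x p + dist p z = dist x z := by
  obtain ⟨f, ⟨hf0, hfL, hf⟩, rfl⟩ := hs
  obtain ⟨t, ht, rfl⟩ := hp
  have h0 := hf 0 (left_mem_Icc.2 dist_nonneg) t ht
  have h1 := hf t ht _ (right_mem_Icc.2 dist_nonneg)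
  rw [hf0] at h0
  rw [hfL] at h1
  rw [h0, h1, abs_of_nonpos (by linarith [ht.1]), abs_of_nonpos (by linarith [ht.2])]
  ring

lemma IsGeodesicSegmentSet.exists_dist_eq {s : Set X} {x z : X}
    (hs : IsGeodesicSegmentSet s x z) {u : ℝ} (hu : u ∈ Icc 0 (dist x z)) :
    ∃ p ∈ s, dist x p = u := by
  obtain ⟨f, ⟨hf0, -, hf⟩, rfl⟩ := hs
  refine ⟨f u, mem_image_of_mem f hu, ?_⟩
  rw [← hf0, hf 0 (left_mem_Icc.2 dist_nonneg) u hu, zero_sub, abs_neg, abs_of_nonneg hu.1]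

lemma IsGeodesicSegmentSet.gromovProd_le_dist {s : Set X} {x z p : X}
    (hs : IsGeodesicSegmentSet s x z) (hp : p ∈ s) (w : X) : gromovProd w x z ≤ dist w p := by
  unfold gromovProd
  linarith [hs.dist_add_dist hp, dist_triangle x p w, dist_triangle z p w, dist_comm x p,
    dist_comm z p, dist_comm w p]

end GromovProduct

section FourPoint

variable {X : Type*} [MetricSpace X] {κ₀ : ℝ}

lemma DeltaThinTriangles.exists_mem_dist_le_gromovProd (hgeo : GeodesicSpace X)
    (hthin : DeltaThinTriangles X κ₀) (w : X) {s : Set X} {x z : X}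
    (hs : IsGeodesicSegmentSet s x z) : ∃ p ∈ s, dist w p ≤ gromovProd w x z + 2 * κ₀ := by
  obtain ⟨f, hf⟩ := hgeo x w
  obtain ⟨f', hf'⟩ := hgeo w z
  have hA : IsGeodesicSegmentSet _ x w := ⟨f, hf, rfl⟩
  have hB : IsGeodesicSegmentSet _ w z := ⟨f', hf', rfl⟩
  -- the internal point of `[x, z]`, at distance `(w · z)_x` from `x`
  obtain ⟨p, hp, hxp⟩ := hs.exists_dist_eq (u := gromovProd x w z)
    ⟨by unfold gromovProd; linarith [dist_triangle w x z, dist_comm x z],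
      by unfold gromovProd; linarith [dist_triangle w z x, dist_comm x z]⟩
  obtain ⟨q, hq, hpq⟩ := hthin x w z _ _ s hA hB hs p hp
  refine ⟨p, hp, ?_⟩
  have hpz := hs.dist_add_dist hp
  unfold gromovProd at hxp ⊢
  rcases hq with hq | hq
  · linarith [hA.dist_add_dist hq, dist_triangle x q p, dist_triangle w q p, dist_comm q p,
      dist_comm w q, dist_comm w x, dist_comm z x, dist_comm w z]
  · linarith [hB.dist_add_dist hq, dist_triangle p q z, dist_triangle w q p, dist_comm q p,
      dist_comm w x, dist_comm z x, dist_comm w z]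

lemma DeltaThinTriangles.min_gromovProd_le (hgeo : GeodesicSpace X)
    (hthin : DeltaThinTriangles X κ₀) (w x y z : X) :
    min (gromovProd w x y) (gromovProd w y z) ≤ gromovProd w x z + 3 * κ₀ := by
  obtain ⟨f, hf⟩ := hgeo x z
  have hs : IsGeodesicSegmentSet _ x z := ⟨f, hf, rfl⟩
  obtain ⟨p, hp, hwp⟩ := hthin.exists_mem_dist_le_gromovProd hgeo w hs
  obtain ⟨g, hg⟩ := hgeo x y
  obtain ⟨g', hg'⟩ := hgeo y z
  have hA : IsGeodesicSegmentSet _ x y := ⟨g, hg, rfl⟩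
  have hB : IsGeodesicSegmentSet _ y z := ⟨g', hg', rfl⟩
  obtain ⟨q, hq, hpq⟩ := hthin x y z _ _ _ hA hB hs p hp
  have hwq : dist w q ≤ gromovProd w x z + 3 * κ₀ := by linarith [dist_triangle w p q]
  rcases hq with hq | hq
  · exact (min_le_left _ _).trans ((hA.gromovProd_le_dist hq w).trans hwq)
  · exact (min_le_right _ _).trans ((hB.gromovProd_le_dist hq w).trans hwq)

lemma DeltaThinTriangles.gromovProd_le_of_lt (hgeo : GeodesicSpace X)
    (hthin : DeltaThinTriangles X κ₀) {w x y z : X}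
    (h : gromovProd w x z + 3 * κ₀ < gromovProd w x y) :
    gromovProd w y z ≤ gromovProd w x z + 3 * κ₀ := by
  have := hthin.min_gromovProd_le hgeo w x y z
  rw [min_le_iff] at this
  exact this.resolve_left h.not_ge

lemma DeltaThinTriangles.min_le_gromovProd_of_eventually (hgeo : GeodesicSpace X)
    (hthin : DeltaThinTriangles X κ₀) {ι : Type*} {l : Filter ι} [l.NeBot] {f : ι → X}
    {w x z : X} {A B : ℝ} (hx : ∀ᶠ i in l, A ≤ gromovProd w x (f i))
    (hz : ∀ᶠ i in l, B ≤ gromovProd w (f i) z) : min A B - 3 * κ₀ ≤ gromovProd w x z := by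
  obtain ⟨i, hxi, hzi⟩ := (hx.and hz).exists
  linarith [min_le_min hxi hzi, hthin.min_gromovProd_le hgeo w x (f i) z]

end FourPoint

section GromovSequences

variable {X : Type*} [MetricSpace X]

lemma tendsto_gromovProd_of_base {ι : Type*} {l : Filter ι} {u v : ι → X} (x w : X)
    (h : Tendsto (fun i => gromovProd x (u i) (v i)) l atTop) :
    Tendsto (fun i => gromovProd w (u i) (v i)) l atTop :=
  tendsto_atTop_mono (fun i => gromovProd_sub_dist_le w x (u i) (v i))
    (tendsto_atTop_add_const_right l _ h)

lemma tendsto_gromovProd_swap {u v : ℕ → X} {x : X}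
    (h : Tendsto (fun p : ℕ × ℕ => gromovProd x (u p.1) (v p.2)) atTop atTop) :
    Tendsto (fun p : ℕ × ℕ => gromovProd x (v p.1) (u p.2)) atTop atTop := by
  have hswap : Tendsto (Prod.swap : ℕ × ℕ → ℕ × ℕ) atTop atTop :=
    tendsto_atTop_atTop.2 fun b => ⟨b.swap, fun p hp => ⟨hp.2, hp.1⟩⟩
  simpa only [Function.comp_def, Prod.fst_swap, Prod.snd_swap, gromovProd_comm x (u _)]
    using h.comp hswap

lemma tendsto_gromovProd_trans {κ₀ : ℝ} (hgeo : GeodesicSpace X)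
    (hthin : DeltaThinTriangles X κ₀) {u v w : ℕ → X} {x : X}
    (huv : Tendsto (fun p : ℕ × ℕ => gromovProd x (u p.1) (v p.2)) atTop atTop)
    (hvw : Tendsto (fun p : ℕ × ℕ => gromovProd x (v p.1) (w p.2)) atTop atTop) :
    Tendsto (fun p : ℕ × ℕ => gromovProd x (u p.1) (w p.2)) atTop atTop := by
  -- pass through `v` at the index `max p q`, which tends to infinity along with `p` and `q`
  have hl : Tendsto (fun p : ℕ × ℕ => (p.1, max p.1 p.2)) atTop atTop :=
    tendsto_atTop_atTop.2 fun b => ⟨b, fun p hp => ⟨hp.1, hp.2.trans (le_max_right _ _)⟩⟩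
  have hr : Tendsto (fun p : ℕ × ℕ => (max p.1 p.2, p.2)) atTop atTop :=
    tendsto_atTop_atTop.2 fun b => ⟨b, fun p hp => ⟨hp.1.trans (le_max_left _ _), hp.2⟩⟩
  refine tendsto_atTop_mono (fun p => ?_) (tendsto_atTop_add_const_right _ (-(3 * κ₀))
    (tendsto_inf_atTop _ (huv.comp hl) (hvw.comp hr)))
  have := hthin.min_gromovProd_le hgeo x (u p.1) (v (max p.1 p.2)) (w p.2)
  simp only [Function.comp_apply]
  linarith

lemma gromovRel_equivalence {κ₀ : ℝ} (hgeo : GeodesicSpace X)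
    (hthin : DeltaThinTriangles X κ₀) : Equivalence (gromovRel (X := X)) :=
  ⟨fun u => u.2, fun h x => tendsto_gromovProd_swap (h x),
    fun huv hvw x => tendsto_gromovProd_trans hgeo hthin (huv x) (hvw x)⟩

lemma SeqConvToBoundary.unique {u : ℕ → X} {ξ η : GromovBoundary X}
    (hξ : SeqConvToBoundary u ξ) (hη : SeqConvToBoundary u η) : ξ = η := by
  obtain ⟨_, rfl⟩ := hξ
  obtain ⟨_, rfl⟩ := hη
  rfl

lemma SeqConvToBoundary.map {u : ℕ → X} {ξ : GromovBoundary X} (h : SeqConvToBoundary u ξ)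
    (g : Iso X) : SeqConvToBoundary (fun n => g (u n)) (boundaryMap g ξ) := by
  obtain ⟨_, rfl⟩ := h
  exact ⟨_, rfl⟩

lemma SeqConvToBoundary.of_dist_le {u v : ℕ → X} {ξ : GromovBoundary X}
    (hu : SeqConvToBoundary u ξ) {C : ℝ} (huv : ∀ n, dist (u n) (v n) ≤ C) :
    SeqConvToBoundary v ξ := by
  obtain ⟨hu, rfl⟩ := hu
  have hv : ∀ w, IsGromovSeq w v := fun w =>
    tendsto_atTop_mono (fun p => by
      linarith [gromovProd_sub_dist_sub_dist_le w (v p.1) (v p.2) (u p.1) (u p.2),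
        huv p.1, huv p.2, dist_comm (u p.1) (v p.1), dist_comm (u p.2) (v p.2)])
      (tendsto_atTop_add_const_right _ (-(2 * C)) (hu w))
  refine ⟨hv, Quot.sound fun w => tendsto_atTop_mono (fun p => ?_)
    (tendsto_atTop_add_const_right _ (-C) (hu w))⟩
  linarith [gromovProd_sub_dist_sub_dist_le w (v p.1) (u p.2) (u p.1) (u p.2), huv p.1,
    dist_comm (u p.1) (v p.1), dist_self (u p.2)]

lemma SeqConvToBoundary.of_tendsto_gromovProd {κ₀ : ℝ} (hgeo : GeodesicSpace X)
    (hthin : DeltaThinTriangles X κ₀) {u v : ℕ → X} {ξ : GromovBoundary X}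
    (hv : SeqConvToBoundary v ξ) {x : X}
    (huv : Tendsto (fun p : ℕ × ℕ => gromovProd x (u p.1) (v p.2)) atTop atTop) :
    SeqConvToBoundary u ξ := by
  obtain ⟨hv, rfl⟩ := hv
  have hu : ∀ w, IsGromovSeq w u := fun w => tendsto_gromovProd_of_base x w
    (tendsto_gromovProd_trans hgeo hthin huv (tendsto_gromovProd_swap huv))
  exact ⟨hu, Quot.sound fun w => tendsto_gromovProd_of_base x w huv⟩

lemma SeqConvToBoundary.tendsto_gromovProd {κ₀ : ℝ} (hgeo : GeodesicSpace X)
    (hthin : DeltaThinTriangles X κ₀) {u v : ℕ → X} {ξ : GromovBoundary X} (hu : SeqConvToBoundary u ξ) (hv : SeqConvToBoundary v ξ) (x : X) :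
    Tendsto (fun p : ℕ × ℕ => gromovProd x (u p.1) (v p.2)) atTop atTop := by
  obtain ⟨hu, rfl⟩ := hu
  obtain ⟨hv, huv⟩ := hv
  exact (gromovRel_equivalence hgeo hthin).eqvGen_iff.1 (Quot.eqvGen_exact huv.symm) x

end GromovSequences

section Isometries

variable {X : Type*} [MetricSpace X] {g : Iso X} {ξ : GromovBoundary X}

lemma boundaryMap_mul (g h : Iso X) (ξ : GromovBoundary X) :
    boundaryMap (g * h) ξ = boundaryMap g (boundaryMap h ξ) := by
  induction ξ using Quot.ind
  rfl

lemma boundaryMap_one (ξ : GromovBoundary X) : boundaryMap 1 ξ = ξ := by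
  induction ξ using Quot.ind
  rfl

lemma boundaryMap_inv_eq_self (h : boundaryMap g ξ = ξ) : boundaryMap g⁻¹ ξ = ξ := by
  conv_lhs => rw [← h]
  rw [← boundaryMap_mul, inv_mul_cancel, boundaryMap_one]

lemma boundaryMap_pow_eq_self (h : boundaryMap g ξ = ξ) (n : ℕ) : boundaryMap (g ^ n) ξ = ξ := by
  induction n with
  | zero => exact boundaryMap_one ξ
  | succ n ih => rw [pow_succ, boundaryMap_mul, h, ih]

lemma SeqConvToBoundary.pow_apply {y : X} (h : SeqConvToBoundary (fun n => (g ^ n) y) ξ)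
    (x : X) : SeqConvToBoundary (fun n => (g ^ n) x) ξ :=
  h.of_dist_le fun n => ((g ^ n).dist_eq y x).le

lemma boundaryMap_eq_self_of_commute {h : Iso X} (hgh : Commute g h) {y : X}
    (hξ : SeqConvToBoundary (fun n => (h ^ n) y) ξ) : boundaryMap g ξ = ξ := by
  have hdist : ∀ n : ℕ, dist ((h ^ n) (g y)) (g ((h ^ n) y)) ≤ 0 := fun n => by
    rw [← IsometryEquiv.mul_apply, ← (hgh.pow_right n).eq, IsometryEquiv.mul_apply, dist_self]
  exact ((hξ.pow_apply (g y)).of_dist_le hdist).unique (hξ.map g) |>.symm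

lemma IsHyperbolicIsom.of_inv (h : IsHyperbolicIsom g⁻¹) : IsHyperbolicIsom g := by
  obtain ⟨a, b, hab, ha, hb, hfwd, hbwd⟩ := h
  refine ⟨b, a, hab.symm, ?_, ?_, ?_, ?_⟩
  · simpa using boundaryMap_inv_eq_self hb
  · simpa using boundaryMap_inv_eq_self ha
  · simpa using hbwd
  · exact hfwd

lemma dist_pow_apply_pow_add_apply (g : Iso X) (y : X) (m n : ℕ) :
    dist ((g ^ m) y) ((g ^ (m + n)) y) = dist y ((g ^ n) y) := by
  rw [pow_add, IsometryEquiv.mul_apply, (g ^ m).dist_eq]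

lemma subadditive_dist_pow_apply (g : Iso X) (y : X) :
    Subadditive fun n => dist y ((g ^ n) y) := fun m n => by
  simpa only [dist_pow_apply_pow_add_apply] using
    dist_triangle y ((g ^ m) y) ((g ^ (m + n)) y)

lemma dist_inv_pow_apply_inv_pow_apply (g : Iso X) (y : X) (k l : ℕ) :
    dist ((g⁻¹ ^ k) y) ((g⁻¹ ^ l) y) = dist ((g ^ l) y) ((g ^ k) y) := by
  have hk : (g ^ k * g ^ l) ((g⁻¹ ^ k) y) = (g ^ l) y := by
    rw [(Commute.pow_pow_self g k l).eq, IsometryEquiv.mul_apply, inv_pow,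
      IsometryEquiv.apply_inv_self]
  have hl : (g ^ k * g ^ l) ((g⁻¹ ^ l) y) = (g ^ k) y := by
    rw [IsometryEquiv.mul_apply, inv_pow, IsometryEquiv.apply_inv_self]
  rw [← (g ^ k * g ^ l).dist_eq, hk, hl]

lemma dist_inv_pow_apply (g : Iso X) (y : X) (k : ℕ) :
    dist ((g⁻¹ ^ k) y) y = dist y ((g ^ k) y) := by
  simpa using dist_inv_pow_apply_inv_pow_apply g y k 0

lemma gromovProd_inv_pow_apply (g : Iso X) (y : X) (m n : ℕ) :
    gromovProd y ((g⁻¹ ^ m) y) ((g⁻¹ ^ n) y) = gromovProd y ((g ^ m) y) ((g ^ n) y) := by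
  unfold gromovProd
  rw [dist_inv_pow_apply, dist_inv_pow_apply, dist_inv_pow_apply_inv_pow_apply,
    dist_comm ((g ^ n) y), dist_comm ((g ^ m) y) y, dist_comm ((g ^ n) y) y]

lemma gromovProd_pow_apply_inv_pow_apply (g : Iso X) (y : X) (m : ℕ) :
    gromovProd y ((g ^ m) y) ((g⁻¹ ^ m) y) =
      dist y ((g ^ m) y) - dist y ((g ^ (2 * m)) y) / 2 := by
  have h : dist ((g ^ m) y) ((g⁻¹ ^ m) y) = dist y ((g ^ (2 * m)) y) := by
    rw [← (g ^ m).dist_eq, ← IsometryEquiv.mul_apply, ← pow_add, inv_pow,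
      IsometryEquiv.apply_inv_self, two_mul, dist_comm]
  unfold gromovProd
  rw [h, dist_inv_pow_apply, dist_comm]
  ring

/-- By Fekete's lemma `d(y, gⁿy) = nτ + o(n)`, while `d(y, g²ⁿy) ≥ 2nτ`. -/
lemma eventually_gromovProd_pow_apply_inv_pow_apply_lt (g : Iso X) (y : X) {ε : ℝ} (hε : 0 < ε) :
    ∀ᶠ m : ℕ in atTop, gromovProd y ((g ^ m) y) ((g⁻¹ ^ m) y) < ε * m := by
  set D : ℕ → ℝ := fun n => dist y ((g ^ n) y)
  have hD := subadditive_dist_pow_apply g y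
  have hbdd : BddBelow (range fun n => D n / n) :=
    ⟨0, by rintro _ ⟨n, rfl⟩; exact div_nonneg dist_nonneg n.cast_nonneg⟩
  have hlt := (hD.tendsto_lim hbdd).eventually (gt_mem_nhds (lt_add_of_pos_right hD.lim hε))
  filter_upwards [hlt, eventually_ge_atTop 1] with m hm hm1
  have hm0 : (0 : ℝ) < m := by exact_mod_cast hm1
  have h2m : hD.lim ≤ D (2 * m) / (2 * m : ℕ) := hD.lim_le_div hbdd (by omega)
  rw [div_lt_iff₀ hm0] at hm
  rw [Nat.cast_mul, Nat.cast_two, le_div_iff₀ (by positivity)] at h2m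
  rw [gromovProd_pow_apply_inv_pow_apply]
  linarith

end Isometries

section Busemann

variable {X : Type*} [MetricSpace X] {a : GromovBoundary X}

namespace IsGeodesicRayTo

variable {γ : ℝ → X} {x : X}

lemma dist_eq (hγ : IsGeodesicRayTo γ x a) {t : ℝ} (ht : 0 ≤ t) : dist x (γ t) = t := by
  have h := hγ.2.1 0 self_mem_Ici t ht
  rwa [hγ.1, zero_sub, abs_neg, abs_of_nonneg ht] at h

lemma gromovProd_eq (hγ : IsGeodesicRayTo γ x a) {s t : ℝ} (hs : 0 ≤ s) (ht : 0 ≤ t) :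
    gromovProd x (γ s) (γ t) = min s t := by
  unfold gromovProd
  rw [dist_comm, hγ.dist_eq hs, dist_comm, hγ.dist_eq ht, hγ.2.1 s hs t ht]
  rcases le_total s t with h | h
  · rw [abs_of_nonpos (by linarith), min_eq_left h]; ring
  · rw [abs_of_nonneg (by linarith), min_eq_right h]; ring

lemma map (hγ : IsGeodesicRayTo γ x a) {g : Iso X} (hg : boundaryMap g a = a) :
    IsGeodesicRayTo (fun t => g (γ t)) (g x) a :=
  ⟨congrArg g hγ.1, fun s hs t ht => by rw [g.dist_eq]; exact hγ.2.1 s hs t ht,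
    hg ▸ hγ.2.2.map g⟩

lemma abs_dist_apply_sub_le (hγ : IsGeodesicRayTo γ x a) (y : X) {t : ℝ} (ht : 0 ≤ t) :
    |dist y (γ t) - t| ≤ dist y x := by
  simpa only [hγ.dist_eq ht] using abs_dist_sub_le y x (γ t)

lemma isBoundedUnder_le (hγ : IsGeodesicRayTo γ x a) (y : X) :
    IsBoundedUnder (· ≤ ·) atTop fun t => dist y (γ t) - t :=
  isBoundedUnder_of_eventually_le (a := dist y x) <| (eventually_ge_atTop 0).mono fun _ ht =>
    (abs_le.1 (hγ.abs_dist_apply_sub_le y ht)).2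

lemma isBoundedUnder_ge (hγ : IsGeodesicRayTo γ x a) (y : X) :
    IsBoundedUnder (· ≥ ·) atTop fun t => dist y (γ t) - t :=
  isBoundedUnder_of_eventually_ge (a := -dist y x) <| (eventually_ge_atTop 0).mono fun _ ht =>
    (abs_le.1 (hγ.abs_dist_apply_sub_le y ht)).1

lemma limsup_le_dist (hγ : IsGeodesicRayTo γ x a) (y : X) :
    limsup (fun t => dist y (γ t) - t) atTop ≤ dist y x :=
  limsup_le_of_le (hγ.isBoundedUnder_ge y).isCoboundedUnder_le <|
    (eventually_ge_atTop 0).mono fun _ ht => (abs_le.1 (hγ.abs_dist_apply_sub_le y ht)).2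

lemma limsup_le_busemann (hγ : IsGeodesicRayTo γ x a) (y : X) :
    limsup (fun t => dist y (γ t) - t) atTop ≤ busemann a y x :=
  le_csSup ⟨dist y x, by rintro _ ⟨γ', hγ', rfl⟩; exact hγ'.limsup_le_dist y⟩ ⟨γ, hγ, rfl⟩

lemma eventually_gromovProd_ge (hγ : IsGeodesicRayTo γ x a) (p : X) :
    ∀ᶠ t in atTop, (dist p x - busemann a p x - 1) / 2 ≤ gromovProd x p (γ t) := by
  have hlt := (hγ.limsup_le_busemann p).trans_lt (lt_add_one (busemann a p x))
  filter_upwards [eventually_lt_of_limsup_lt hlt (hγ.isBoundedUnder_le p),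
    eventually_ge_atTop 0] with t ht ht0
  unfold gromovProd
  rw [dist_comm (γ t), hγ.dist_eq ht0]
  linarith

end IsGeodesicRayTo

lemma busemann_le_dist (a : GromovBoundary X) (y x : X) : busemann a y x ≤ dist y x :=
  Real.sSup_le (by rintro _ ⟨γ, hγ, rfl⟩; exact hγ.limsup_le_dist y) dist_nonneg

lemma exists_isGeodesicRayTo_of_busemann_ne_zero {y x : X} (h : busemann a y x ≠ 0) :
    ∃ γ, IsGeodesicRayTo γ x a := by
  by_contra! hne
  exact h (by simp [busemann, hne])

lemma busemann_map {g : Iso X} (hg : boundaryMap g a = a) (z x : X) :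
    busemann a (g z) (g x) = busemann a z x := by
  unfold busemann
  congr 1
  ext r
  constructor
  · rintro ⟨γ, hγ, rfl⟩
    refine ⟨fun t => g⁻¹ (γ t), by simpa using hγ.map (boundaryMap_inv_eq_self hg), ?_⟩
    simp_rw [← g.dist_eq z, IsometryEquiv.apply_inv_self]
  · rintro ⟨γ, hγ, rfl⟩
    exact ⟨fun t => g (γ t), hγ.map hg, by simp_rw [g.dist_eq]⟩

end Busemann

def IsQuasiCocycle {X : Type*} (f : X → X → ℝ) (c : ℝ) : Prop :=
  ∀ x y z : X, |f z y - f z x + f y x| ≤ c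

namespace IsQuasiCocycle

variable {X : Type*} {f : X → X → ℝ} {c : ℝ}

lemma nonneg (hf : IsQuasiCocycle f c) (x : X) : 0 ≤ c :=
  (abs_nonneg _).trans (hf x x x)

lemma abs_apply_self_le (hf : IsQuasiCocycle f c) (x : X) : |f x x| ≤ c := by
  simpa using hf x x x

lemma abs_add_swap_le (hf : IsQuasiCocycle f c) (x y : X) : |f x y + f y x| ≤ 2 * c := by
  have h := hf y x y
  have hy := hf.abs_apply_self_le y
  rw [abs_le] at h hy ⊢
  constructor <;> linarith

lemma abs_sub_le_of_le (hf : IsQuasiCocycle f c) {x y : X} (hyx : f y x ≤ c) (hxy : f x y ≤ c)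
    (z : X) : |f z y - f z x| ≤ 4 * c := by
  have h := hf x y z
  have hswap := hf.abs_add_swap_le x y
  rw [abs_le] at h hswap ⊢
  constructor <;> linarith

end IsQuasiCocycle

section Criterion

variable {X : Type*} [MetricSpace X] {κ₀ : ℝ} (hgeo : GeodesicSpace X)
  (hthin : DeltaThinTriangles X κ₀)
include hgeo hthin

lemma not_tendsto_gromovProd_pow_apply_inv_pow_apply {g : Iso X} {y : X} {σ C : ℝ}
    (hσ : 0 < σ)
    (hfwd : ∀ m j k : ℕ, m ≤ j → m ≤ k → σ * m - C ≤ gromovProd y ((g ^ j) y) ((g ^ k) y)) :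
    ¬Tendsto (fun p : ℕ × ℕ => gromovProd y ((g ^ p.1) y) ((g⁻¹ ^ p.2) y)) atTop atTop := by
  intro h
  obtain ⟨m, hPm, hm⟩ := ((eventually_gromovProd_pow_apply_inv_pow_apply_lt g y (half_pos hσ)).and
    ((tendsto_natCast_atTop_atTop.const_mul_atTop (half_pos hσ)).eventually_gt_atTop
      (C + max (3 * κ₀) (6 * κ₀)))).exists
  set P := gromovProd y ((g ^ m) y) ((g⁻¹ ^ m) y)
  -- `(gᵐy · gʲy)_y ≥ σm - C` is much larger than `P` for `j ≥ m`, so the four-point condition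
  -- caps `(gᵖy · g⁻ᵠy)_y` by `P + 6κ₀` for all `p, q ≥ m`
  have hq : ∀ q, m ≤ q → gromovProd y ((g ^ m) y) ((g⁻¹ ^ q) y) ≤ P + 3 * κ₀ := by
    intro q hq
    have hlt : gromovProd y ((g⁻¹ ^ m) y) ((g ^ m) y) + 3 * κ₀ <
        gromovProd y ((g⁻¹ ^ m) y) ((g⁻¹ ^ q) y) := by
      rw [gromovProd_inv_pow_apply, gromovProd_comm]
      linarith [hfwd m m q le_rfl hq, le_max_left (3 * κ₀) (6 * κ₀)]
    have := hthin.gromovProd_le_of_lt hgeo hlt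
    rwa [gromovProd_comm, gromovProd_comm y ((g⁻¹ ^ m) y)] at this
  have hpq : ∀ p q, m ≤ p → m ≤ q → gromovProd y ((g ^ p) y) ((g⁻¹ ^ q) y) ≤ P + 6 * κ₀ := by
    intro p q hp hq'
    have hlt : gromovProd y ((g ^ m) y) ((g⁻¹ ^ q) y) + 3 * κ₀ <
        gromovProd y ((g ^ m) y) ((g ^ p) y) := by
      linarith [hfwd m m p le_rfl hp, hq q hq', le_max_right (3 * κ₀) (6 * κ₀)]
    linarith [hthin.gromovProd_le_of_lt hgeo hlt, hq q hq']
  obtain ⟨p, hp, hmp⟩ :=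
    ((tendsto_atTop.1 h (P + 6 * κ₀ + 1)).and (eventually_ge_atTop (m, m))).exists
  linarith [hpq p.1 p.2 hmp.1 hmp.2]

theorem isHyperbolicIsom_of_drift {g : Iso X} {a : GromovBoundary X} {γ : ℝ → X} {y : X}
    (hγ : IsGeodesicRayTo γ y a) {σ C : ℝ} (hσ : 0 < σ)
    (hdrift : ∀ n : ℕ, ∀ᶠ t in atTop, σ * n - C ≤ gromovProd y ((g ^ n) y) (γ t)) :
    IsHyperbolicIsom g := by
  have hfwd : ∀ m j k : ℕ, m ≤ j → m ≤ k →
      σ * m - (C + 3 * κ₀) ≤ gromovProd y ((g ^ j) y) ((g ^ k) y) := by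
    intro m j k hj hk
    have := hthin.min_le_gromovProd_of_eventually hgeo (hdrift j)
      (by simpa only [gromovProd_comm y (γ _)] using hdrift k)
    have hmin : σ * m - C ≤ min (σ * j - C) (σ * k - C) := le_min (by gcongr) (by gcongr)
    linarith
  have hray : ∀ j n : ℕ, min (σ * j - C) n - 3 * κ₀ ≤ gromovProd y ((g ^ j) y) (γ n) :=
    fun j n => hthin.min_le_gromovProd_of_eventually hgeo (hdrift j) <|
      (eventually_ge_atTop (n : ℝ)).mono fun t ht => by
        rw [hγ.gromovProd_eq (n.cast_nonneg.trans ht) n.cast_nonneg, min_eq_right ht]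
  have hu : SeqConvToBoundary (fun n => (g ^ n) y) a := by
    refine hγ.2.2.of_tendsto_gromovProd hgeo hthin (x := y) <|
      tendsto_atTop_mono (fun p => hray p.1 p.2) <| tendsto_atTop_add_const_right _ _ <|
        tendsto_inf_atTop _ (tendsto_atTop_add_const_right _ _ ?_) ?_
    · exact (tendsto_natCast_atTop_atTop.comp
        (by rw [← prod_atTop_atTop_eq]; exact tendsto_fst)).const_mul_atTop hσ
    · exact tendsto_natCast_atTop_atTop.comp
        (by rw [← prod_atTop_atTop_eq]; exact tendsto_snd)
  have hv : ∀ w, IsGromovSeq w fun n => (g⁻¹ ^ n) y := fun w =>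
    tendsto_gromovProd_of_base y w <| by
      simpa only [IsGromovSeq, gromovProd_inv_pow_apply] using hu.1 y
  have hb : SeqConvToBoundary (fun n => (g⁻¹ ^ n) y) (Quot.mk _ ⟨_, hv⟩) := ⟨hv, rfl⟩
  refine ⟨a, Quot.mk _ ⟨_, hv⟩, fun hab => ?_, boundaryMap_eq_self_of_commute (Commute.refl g) hu,
    boundaryMap_eq_self_of_commute (Commute.refl g).inv_right hb, hu.pow_apply, hb.pow_apply⟩
  have hva : SeqConvToBoundary (fun n => (g⁻¹ ^ n) y) a := by rw [hab]; exact hb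
  exact not_tendsto_gromovProd_pow_apply_inv_pow_apply hgeo hthin hσ hfwd
    (hu.tendsto_gromovProd hgeo hthin hva y)

end Criterion

section BusemannDrift

variable {X : Type*} [MetricSpace X] {a : GromovBoundary X} {c : ℝ}
  (hcoc : IsQuasiCocycle (busemann a) c) {g : Iso X} (hg : boundaryMap g a = a)
include hcoc hg

lemma busemann_pow_apply_ge (y : X) (n : ℕ) :
    n * (busemann a y (g y) - c) - c ≤ busemann a y ((g ^ n) y) := by
  have hsub : Subadditive fun n => c - busemann a y ((g ^ n) y) := fun m n => by
    have hmap : busemann a ((g ^ m) y) ((g ^ (m + n)) y) = busemann a y ((g ^ n) y) := by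
      rw [pow_add, IsometryEquiv.mul_apply, busemann_map (boundaryMap_pow_eq_self hg m)]
    dsimp only
    linarith [(abs_le.1 (hcoc ((g ^ (m + n)) y) ((g ^ m) y) y)).2]
  have h := hsub.apply_mul_add_le n 1 0
  simp only [mul_one, add_zero, pow_one, pow_zero, IsometryEquiv.coe_one, id] at h
  linarith [(abs_le.1 (hcoc.abs_apply_self_le y)).1]

theorem isHyperbolicIsom_of_lt_busemann {κ₀ : ℝ} (hgeo : GeodesicSpace X)
    (hthin : DeltaThinTriangles X κ₀) {y : X} (hy : c < busemann a y (g y)) :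
    IsHyperbolicIsom g := by
  obtain ⟨γ, hγ⟩ :=
    exists_isGeodesicRayTo_of_busemann_ne_zero ((hcoc.nonneg y).trans_lt hy).ne'
  have hray : IsGeodesicRayTo (fun t => g⁻¹ (γ t)) y a := by
    simpa using hγ.map (boundaryMap_inv_eq_self hg)
  refine isHyperbolicIsom_of_drift hgeo hthin hray (sub_pos.2 hy) (C := 2 * c + 1) fun n => ?_
  filter_upwards [hray.eventually_gromovProd_ge ((g ^ n) y)] with t ht
  linarith [busemann_pow_apply_ge hcoc hg y n, busemann_le_dist a y ((g ^ n) y),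
    dist_comm y ((g ^ n) y), (abs_le.1 (hcoc.abs_add_swap_le y ((g ^ n) y))).2]

end BusemannDrift

theorem nonhyperbolic_isometries_almost_preserve_busemann_general
    {X : Type} [MetricSpace X] (hgeo : GeodesicSpace X)
    (κ₀ : ℝ) (hthin : DeltaThinTriangles X κ₀)
    (c : ℝ) (hc : 0 < c)
    (hcoc : ∀ (a : GromovBoundary X) (x y z : X),
      |busemann a z y - busemann a z x + busemann a y x| ≤ c) :
    ∃ κ : ℝ, 0 < κ ∧ ∀ (g : Iso X) (a : GromovBoundary X),
      boundaryMap g a = a → ¬IsHyperbolicIsom g →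
      ∀ y z : X, |busemann a z y - busemann a z (g y)| ≤ κ := by
  refine ⟨4 * c, by positivity, fun g a hg hnot y z => ?_⟩
  have hg' := boundaryMap_inv_eq_self hg
  have hfwd : busemann a y (g y) ≤ c := not_lt.1 fun h =>
    hnot (isHyperbolicIsom_of_lt_busemann (hcoc a) hg hgeo hthin h)
  have hbwd : busemann a (g y) y ≤ c := by
    rw [← busemann_map hg', IsometryEquiv.inv_apply_self]
    exact not_lt.1 fun h =>
      hnot (isHyperbolicIsom_of_lt_busemann (hcoc a) hg' hgeo hthin h).of_inv
  exact IsQuasiCocycle.abs_sub_le_of_le (hcoc a) hfwd hbwd z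

/-- **Theorem (Statement 17).** Let `X` be a proper hyperbolic geodesic metric space with
thin-triangles constant `κ₀` and let `c > 0` be the universal constant controlling the
Busemann cocycle identity. Then there is `κ > 0` such that every isometry of `X` which
fixes a boundary point `a` and is not hyperbolic moves every Busemann function `β_a(·,y)`
a bounded amount: `|β_a(z,y) − β_a(z,gy)| ≤ κ` for all `y, z`. -/
theorem nonhyperbolic_isometries_almost_preserve_busemann
    {X : Type} [MetricSpace X] [ProperSpace X] (hgeo : GeodesicSpace X)
    (κ₀ : ℝ) (hκ : 0 < κ₀) (hthin : DeltaThinTriangles X κ₀)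
    (c : ℝ) (hc : 0 < c)
    (hcoc : ∀ (a : GromovBoundary X) (x y z : X),
      |busemann a z y - busemann a z x + busemann a y x| ≤ c) :
    ∃ κ : ℝ, 0 < κ ∧ ∀ (g : Iso X) (a : GromovBoundary X),
      boundaryMap g a = a → ¬IsHyperbolicIsom g →
      ∀ y z : X, |busemann a z y - busemann a z (g y)| ≤ κ :=
  nonhyperbolic_isometries_almost_preserve_busemann_general hgeo κ₀ hthin c hc hcoc

end PaperHyp
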